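/- Let φ : ℝ → ℝ be defined by φ(t) = −2 e^{−|t|} and γ : ℝ → ℝ by γ(t) = 4|t| e^{−|t|}. Then for every t ∈ ℝ there holds ∫_ℝ φ(t−s) φ(s) ds + 2 φ(t) = γ(t); equivalently, ∫_ℝ 4 e^{−|t−s|} e^{−|s|} ds = 4(1+|t|) e^{−|t|} for every t ∈ ℝ. -/

import Mathlib

/-!
For `a > 0` and `t ≥ 0`, split the line at `0` and `t`: on `(-∞, 0]` the integrand of
`∫ e^{-a|t-s|} e^{-a|s|} ds` is `e^{-at} e^{2as}`, on `(0, t]` it is the constant `e^{-at}`, and on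
`(t, ∞)` it is `e^{at} e^{-2as}`. The two tails contribute `e^{-at}/(2a)` each and the middle
`t e^{-at}`, so the integral is `(1/a + |t|) e^{-a|t|}`; the substitution `s ↦ -s` shows that it is
even in `t`. Since `φ(t-s) φ(s) = 4 e^{-|t-s|} e^{-|s|}`, the case `a = 1` gives both identities.
-/

open MeasureTheory Set
open scoped Real

noncomputable section

def phiEx (t : ℝ) : ℝ := -2 * Real.exp (-|t|)

def gammaEx (t : ℝ) : ℝ := 4 * |t| * Real.exp (-|t|)

theorem integral_eq_Iic_add_Ioc_add_Ioi {E : Type*} [NormedAddCommGroup E] [NormedSpace ℝ E]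
    {f : ℝ → E} {a b : ℝ} (hab : a ≤ b) (h_left : IntegrableOn f (Iic a))
    (h_mid : IntegrableOn f (Ioc a b)) (h_right : IntegrableOn f (Ioi b)) :
    ∫ x, f x = (∫ x in Iic a, f x) + (∫ x in Ioc a b, f x) + ∫ x in Ioi b, f x := by
  have h_Iic : IntegrableOn f (Iic b) := Iic_union_Ioc_eq_Iic hab ▸ h_left.union h_mid
  rw [← intervalIntegral.integral_Iic_add_Ioi h_Iic h_right, ← Iic_union_Ioc_eq_Iic hab,
    setIntegral_union (Iic_disjoint_Ioc le_rfl) measurableSet_Ioc h_left h_mid]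

theorem integral_exp_neg_mul_abs_sub_mul_exp_neg_mul_abs_of_nonneg {a t : ℝ} (ha : 0 < a)
    (ht : 0 ≤ t) :
    ∫ s, Real.exp (-(a * |t - s|)) * Real.exp (-(a * |s|)) = (a⁻¹ + t) * Real.exp (-(a * t)) := by
  set f : ℝ → ℝ := fun s ↦ Real.exp (-(a * |t - s|)) * Real.exp (-(a * |s|))
  have h_left : EqOn f (fun s ↦ Real.exp (-(a * t)) * Real.exp (2 * a * s)) (Iic 0) := by
    intro s (hs : s ≤ 0)
    simp only [f, abs_of_nonneg (by linarith : 0 ≤ t - s), abs_of_nonpos hs, ← Real.exp_add]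
    ring_nf
  have h_mid : EqOn f (fun _ ↦ Real.exp (-(a * t))) (Ioc 0 t) := by
    rintro s ⟨hs₀, hst⟩
    simp only [f, abs_of_nonneg (by linarith : 0 ≤ t - s), abs_of_pos hs₀, ← Real.exp_add]
    ring_nf
  have h_right : EqOn f (fun s ↦ Real.exp (a * t) * Real.exp (-(2 * a) * s)) (Ioi t) := by
    intro s (hs : t < s)
    simp only [f, abs_of_neg (by linarith : t - s < 0), abs_of_pos (ht.trans_lt hs),
      ← Real.exp_add]
    ring_nf
  have h2a : 0 < 2 * a := by positivity
  rw [integral_eq_Iic_add_Ioc_add_Ioi ht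
      (IntegrableOn.congr_fun ((integrableOn_exp_mul_Iic h2a 0).const_mul _) h_left.symm
        measurableSet_Iic)
      (IntegrableOn.congr_fun (integrableOn_const measure_Ioc_lt_top.ne) h_mid.symm
        measurableSet_Ioc)
      (IntegrableOn.congr_fun ((integrableOn_exp_mul_Ioi (neg_neg_of_pos h2a) t).const_mul _)
        h_right.symm measurableSet_Ioi),
    setIntegral_congr_fun measurableSet_Iic h_left, setIntegral_congr_fun measurableSet_Ioc h_mid,
    setIntegral_congr_fun measurableSet_Ioi h_right, integral_const_mul, integral_const_mul,
    integral_exp_mul_Iic h2a, integral_exp_mul_Ioi (neg_neg_of_pos h2a), setIntegral_const,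
    Real.volume_real_Ioc_of_le ht]
  have h_tail : Real.exp (a * t) * Real.exp (-(2 * a) * t) = Real.exp (-(a * t)) := by
    rw [← Real.exp_add]; ring_nf
  simp only [mul_zero, Real.exp_zero, sub_zero, smul_eq_mul, neg_div_neg_eq, ← mul_div_assoc,
    h_tail]
  field_simp
  ring

theorem integral_exp_neg_mul_abs_sub_mul_exp_neg_mul_abs {a : ℝ} (ha : 0 < a) (t : ℝ) :
    ∫ s, Real.exp (-(a * |t - s|)) * Real.exp (-(a * |s|)) =
      (a⁻¹ + |t|) * Real.exp (-(a * |t|)) := by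
  rcases le_total 0 t with ht | ht
  · rw [abs_of_nonneg ht, integral_exp_neg_mul_abs_sub_mul_exp_neg_mul_abs_of_nonneg ha ht]
  · have h_reflect : ∫ s, Real.exp (-(a * |t - s|)) * Real.exp (-(a * |s|)) =
        ∫ s, Real.exp (-(a * |-t - s|)) * Real.exp (-(a * |s|)) := by
      rw [← integral_neg_eq_self]
      congr 1 with s
      rw [show t - -s = -(-t - s) by ring, abs_neg, abs_neg]
    rw [h_reflect, abs_of_nonpos ht,
      integral_exp_neg_mul_abs_sub_mul_exp_neg_mul_abs_of_nonneg ha (neg_nonneg.2 ht)]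

/-- the fluctuation-dissipation relation `φ*φ + 2φ = γ` holds for
`φ(t) = -2e^{-|t|}` and `γ(t) = 4|t|e^{-|t|}`; equivalently,
`∫_ℝ 4 e^{-|t-s|} e^{-|s|} ds = 4(1+|t|) e^{-|t|}`. -/
theorem fdr_scalar_example (t : ℝ) :
    ((∫ s : ℝ, phiEx (t - s) * phiEx s) + 2 * phiEx t = gammaEx t) ∧
    (∫ s : ℝ, 4 * Real.exp (-|t - s|) * Real.exp (-|s|)) =
      4 * (1 + |t|) * Real.exp (-|t|) := by
  have h_conv : ∫ s, 4 * Real.exp (-|t - s|) * Real.exp (-|s|) =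
      4 * (1 + |t|) * Real.exp (-|t|) := by
    simpa only [mul_assoc, integral_const_mul, one_mul, inv_one] using
      congrArg (4 * ·) (integral_exp_neg_mul_abs_sub_mul_exp_neg_mul_abs one_pos t)
  refine ⟨?_, h_conv⟩
  have h_phi : ∀ s, phiEx (t - s) * phiEx s = 4 * Real.exp (-|t - s|) * Real.exp (-|s|) := by
    intro s; simp only [phiEx]; ring
  simp_rw [h_phi, h_conv]
  simp only [phiEx, gammaEx]
  ring

end
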